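/- For every g ≥ 1 and every n ≥ 1, the map θ that removes from an A-shape the arc joining the vertex following the partner of vertex 2 to the vertex 2n−1 (deleting its two endpoints and relabeling the remaining vertices) is a genus-preserving bijection from 𝒜_g(n+2) onto ℬ_g(n+1); in particular |𝒜_g(n+2)| = |ℬ_g(n+1)| for all n. -/
import Mathlib


namespace RNA

noncomputable section

/-- The forward orbit of `x` under iteration of `f`. -/
def orbitOf (f : ℕ → ℕ) (x : ℕ) : Set ℕ := {y | ∃ j : ℕ, f^[j] x = y}

/-- The number of cycles (orbits) of `f` among the points `< k`. -/
def numCyclesOn (f : ℕ → ℕ) (k : ℕ) : ℕ :=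
  Set.ncard {S : Set ℕ | ∃ x, x < k ∧ S = orbitOf f x}

/-- The number of cycles of length at least `3` among the points `< k` (multiloops). -/
def numMultiOn (f : ℕ → ℕ) (k : ℕ) : ℕ :=
  Set.ncard {S : Set ℕ | (∃ x, x < k ∧ S = orbitOf f x) ∧ 3 ≤ S.ncard}

/-- The cyclic permutation `(0 1 ⋯ k-1)`, as a function on `ℕ` fixing everything `≥ k`. -/
def gammaOne (k : ℕ) : ℕ → ℕ := fun i => if i + 1 = k then 0 else if i < k then i + 1 else i

/-- The permutation with the two cycles `(0 ⋯ m-1)` and `(m ⋯ k-1)`. -/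
def gammaTwo (m k : ℕ) : ℕ → ℕ := fun i =>
  if i + 1 = m then 0 else if i + 1 = k then m else if i < k then i + 1 else i

/-- A planted 1-backbone diagram with `n` arcs: an involution on the vertices
`0, 1, …, 2n-1` (shifting the paper's labels `1, …, 2n` by one). -/
structure OneD where
  n : ℕ
  f : ℕ → ℕ

namespace OneD

/-- Well-formedness: `n ≥ 1`, `f` is a fixed-point-free involution of `{0, …, 2n-1}`
(extended by the identity elsewhere) pairing `0` with `2n-1` (the rainbow). -/
def WF (D : OneD) : Prop :=
  1 ≤ D.n ∧ (∀ i, i < 2 * D.n → D.f i < 2 * D.n) ∧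
    (∀ i, 2 * D.n ≤ i → D.f i = i) ∧ (∀ i, D.f (D.f i) = i) ∧
    (∀ i, i < 2 * D.n → D.f i ≠ i) ∧ D.f 0 = 2 * D.n - 1

/-- `{i,j}` is an arc. -/
def arc (D : OneD) (i j : ℕ) : Prop := i < 2 * D.n ∧ D.f i = j

/-- A shape: no 1-arc other than possibly the rainbow, and no stack
(no pair of arcs `{i,j}`, `{i+1,j-1}` with `i+1 < j-1`). -/
def IsShape (D : OneD) : Prop :=
  (∀ i, D.arc i (i + 1) → i = 0 ∧ i + 1 = 2 * D.n - 1) ∧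
  (∀ i j, D.arc i j → D.arc (i + 1) (j - 1) → ¬ (i + 1 < j - 1))

/-- The boundary permutation `α ∘ γ`. -/
def bd (D : OneD) : ℕ → ℕ := D.f ∘ gammaOne (2 * D.n)

/-- The number `r` of boundary components. -/
def r (D : OneD) : ℕ := numCyclesOn D.bd (2 * D.n)

/-- The number of multiloops: boundary components of length at least 3. -/
def nMulti (D : OneD) : ℕ := numMultiOn D.bd (2 * D.n)

/-- The genus `g`, defined by `2 - 2g - r = 1 - n`. -/
def HasGenus (D : OneD) (g : ℕ) : Prop := 2 * g + D.r = D.n + 1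

/-- A-shape: the vertex following the partner of vertex `1` (paper's vertex `2`)
is paired with vertex `2n-2` (paper's vertex `2n-1`); only for `n ≥ 2`. -/
def IsA (D : OneD) : Prop := 2 ≤ D.n ∧ D.f (D.f 1 + 1) = 2 * D.n - 2

/-- B-shape: a shape with `n ≥ 2` arcs which is not an A-shape. -/
def IsB (D : OneD) : Prop := 2 ≤ D.n ∧ D.f (D.f 1 + 1) ≠ 2 * D.n - 2

end OneD

/-- The set of 1-backbone shapes of genus `g`. -/
def oneShapeSet (g : ℕ) : Set OneD := {D | D.WF ∧ D.IsShape ∧ D.HasGenus g}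

/-- The set of 1-backbone shapes of genus `g` with `n` arcs. -/
def oneShapeSetN (g n : ℕ) : Set OneD := {D | D ∈ oneShapeSet g ∧ D.n = n}

/-- The set of A-shapes of genus `g`. -/
def ASet (g : ℕ) : Set OneD := {D | D ∈ oneShapeSet g ∧ D.IsA}

/-- The set `𝒜_g(n)` of A-shapes of genus `g` with `n` arcs. -/
def ASetN (g n : ℕ) : Set OneD := {D | D ∈ oneShapeSetN g n ∧ D.IsA}

/-- The set `ℬ_g(n)` of B-shapes of genus `g` with `n` arcs. -/
def BSetN (g n : ℕ) : Set OneD := {D | D ∈ oneShapeSetN g n ∧ D.IsB}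

/-- `s_g(n)`: the number of 1-backbone shapes of genus `g` with `n` arcs. -/
def sCount (g n : ℕ) : ℕ := (oneShapeSetN g n).ncard

/-- `a_g(n)`: the number of A-shapes of genus `g` with `n` arcs. -/
def aCount (g n : ℕ) : ℕ := (ASetN g n).ncard

/-- A 2-backbone diagram with `n` arcs and cut point `m`: an involution on the
vertices `0, …, 2n-1`, with backbones `{0, …, m-1}` and `{m, …, 2n-1}`. -/
structure TwoD where
  n : ℕ
  m : ℕ
  f : ℕ → ℕ

namespace TwoD

/-- Well-formedness of a 2-backbone matching: two nonempty backbones and `f` a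
fixed-point-free involution of `{0, …, 2n-1}` (extended by the identity). -/
def WF (D : TwoD) : Prop :=
  1 ≤ D.m ∧ D.m < 2 * D.n ∧ (∀ i, i < 2 * D.n → D.f i < 2 * D.n) ∧
    (∀ i, 2 * D.n ≤ i → D.f i = i) ∧ (∀ i, D.f (D.f i) = i) ∧
    (∀ i, i < 2 * D.n → D.f i ≠ i)

/-- `{i,j}` is an arc. -/
def arc (D : TwoD) (i j : ℕ) : Prop := i < 2 * D.n ∧ D.f i = j

/-- `i` and `j` lie in the same backbone. -/
def sameBB (D : TwoD) (i j : ℕ) : Prop := (i < D.m ∧ j < D.m) ∨ (D.m ≤ i ∧ D.m ≤ j)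

/-- Connectivity: some arc has one endpoint in each backbone. -/
def Connected (D : TwoD) : Prop := ∃ i j, D.arc i j ∧ i < D.m ∧ D.m ≤ j

/-- A 2-backbone shape: both rainbows `{0, m-1}` and `{m, 2n-1}` are present,
there is no 1-arc (an arc `{i,i+1}` within one backbone) other than possibly the
rainbows, and no stack. -/
def IsShape (D : TwoD) : Prop :=
  2 ≤ D.m ∧ D.m + 2 ≤ 2 * D.n ∧ D.f 0 = D.m - 1 ∧ D.f D.m = 2 * D.n - 1 ∧
  (∀ i, D.arc i (i + 1) → D.sameBB i (i + 1) →
      (i = 0 ∧ i + 1 = D.m - 1) ∨ (i = D.m ∧ i + 1 = 2 * D.n - 1)) ∧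
  (∀ i j, D.arc i j → D.arc (i + 1) (j - 1) → D.sameBB i (i + 1) →
      D.sameBB (j - 1) j → ¬ (i + 1 < j - 1))

/-- The boundary permutation `α ∘ γ`. -/
def bd (D : TwoD) : ℕ → ℕ := D.f ∘ gammaTwo D.m (2 * D.n)

/-- The number `r` of boundary components. -/
def r (D : TwoD) : ℕ := numCyclesOn D.bd (2 * D.n)

/-- The number of multiloops: boundary components of length at least 3. -/
def nMulti (D : TwoD) : ℕ := numMultiOn D.bd (2 * D.n)

/-- The genus `g`, defined by `2 - 2g - r = 2 - n`. -/
def HasGenus (D : TwoD) (g : ℕ) : Prop := 2 * g + D.r = D.n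

end TwoD

/-- The set `𝒬_g(n)` of connected 2-backbone shapes of genus `g` with `n` arcs. -/
def twoShapeSetN (g n : ℕ) : Set TwoD :=
  {D | D.WF ∧ D.IsShape ∧ D.Connected ∧ D.HasGenus g ∧ D.n = n}

/-- `q_g(n)`: the number of connected 2-backbone shapes of genus `g` with `n` arcs. -/
def qCount (g n : ℕ) : ℕ := (twoShapeSetN g n).ncard

/-- The gluing map `η`: concatenate the two backbones (the two old rainbows become
ordinary arcs) and add a new rainbow over the resulting single backbone. -/
def glue (D : TwoD) : OneD :=
  ⟨D.n + 1, fun i =>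
    if i = 0 then 2 * D.n + 1
    else if i = 2 * D.n + 1 then 0
    else if i ≤ 2 * D.n then D.f (i - 1) + 1
    else i⟩

/-- Place an ordered pair of 1-backbone diagrams on two backbones,
each keeping its own rainbow. -/
def combine (S T : OneD) : TwoD :=
  ⟨S.n + T.n, 2 * S.n, fun i =>
    if i < 2 * S.n then S.f i
    else if i < 2 * (S.n + T.n) then T.f (i - 2 * S.n) + 2 * S.n
    else i⟩

/-- The set `𝒬'_g(N)`: the disjoint union of the set of connected 2-backbone shapes
of genus `g` with `N` arcs and the set of ordered pairs of 1-backbone shapes whose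
genera are positive and sum to `g+1` and whose arc numbers sum to `N`. -/
def QprimeSetN (g N : ℕ) : Set (TwoD ⊕ OneD × OneD) :=
  {x | Sum.elim
        (fun D : TwoD => D.WF ∧ D.IsShape ∧ D.Connected ∧ D.HasGenus g ∧ D.n = N)
        (fun p : OneD × OneD =>
          p.1.WF ∧ p.1.IsShape ∧ p.2.WF ∧ p.2.IsShape ∧
          (∃ g₁ g₂, 1 ≤ g₁ ∧ 1 ≤ g₂ ∧ g₁ + g₂ = g + 1 ∧
            p.1.HasGenus g₁ ∧ p.2.HasGenus g₂) ∧
          p.1.n + p.2.n = N) x}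

/-- The gluing map `η` on `𝒬'`: glue a connected 2-backbone shape directly, and glue
a pair of 1-backbone shapes after placing them on two backbones. -/
def etaMap : TwoD ⊕ OneD × OneD → OneD := Sum.elim glue fun p => glue (combine p.1 p.2)

/-- The 2-backbone diagram underlying an element of `𝒬'`. -/
def underlyingTwoD : TwoD ⊕ OneD × OneD → TwoD := Sum.elim id fun p => combine p.1 p.2

/-- Old label of the new vertex `k` after deleting the two points `a < b`. -/
def insTwo (a b k : ℕ) : ℕ := if k < a then k else if k + 1 < b then k + 1 else k + 2

/-- New label of the old vertex `j` after deleting the two points `a < b`. -/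
def delTwo (a b j : ℕ) : ℕ := j - (if a < j then 1 else 0) - (if b < j then 1 else 0)

/-- The involution obtained from `f` by deleting the two paired points `a < b`
and relabeling. -/
def deleteTwo (f : ℕ → ℕ) (a b : ℕ) : ℕ → ℕ := fun k => delTwo a b (f (insTwo a b k))

/-- The map `θ`: remove from an A-shape the arc joining the vertex following the
partner of vertex `1` (paper's vertex `2`) to the vertex `2n-2` (paper's `2n-1`),
deleting its two endpoints and relabeling. -/
def theta (D : OneD) : OneD := ⟨D.n - 1, deleteTwo D.f (D.f 1 + 1) (2 * D.n - 2)⟩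

/-- The new cut point after deleting the points `a` and `b`. -/
def mshift (m a b : ℕ) : ℕ := m - (if a < m then 1 else 0) - (if b < m then 1 else 0)

/-- One reduction step: delete a 1-arc (an arc `{i,i+1}` within one backbone), or
collapse a stack `{i,j}`, `{i+1,j-1}` by deleting the inner arc `{i+1,j-1}`. -/
def Step (M M' : TwoD) : Prop :=
  (∃ i, M.arc i (i + 1) ∧ M.sameBB i (i + 1) ∧
      M' = ⟨M.n - 1, mshift M.m i (i + 1), deleteTwo M.f i (i + 1)⟩) ∨
  (∃ i j, M.arc i j ∧ M.arc (i + 1) (j - 1) ∧ i + 1 < j - 1 ∧ M.sameBB i (i + 1) ∧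
      M.sameBB (j - 1) j ∧
      M' = ⟨M.n - 1, mshift M.m (i + 1) (j - 1), deleteTwo M.f (i + 1) (j - 1)⟩)

/-- A pure preshape: no 1-arc and no stack remain. -/
def Reduced (P : TwoD) : Prop :=
  (∀ i, ¬ (P.arc i (i + 1) ∧ P.sameBB i (i + 1))) ∧
  (∀ i j, P.arc i j → P.arc (i + 1) (j - 1) → P.sameBB i (i + 1) →
      P.sameBB (j - 1) j → ¬ (i + 1 < j - 1))

/-- Relabeling of an old vertex of a preshape after planting rainbows. -/
def newlab (m o : ℕ) : ℕ := if o < m then o + 1 else o + 3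

/-- Plant a rainbow over each backbone of a pure preshape. -/
def plant (P : TwoD) : TwoD :=
  ⟨P.n + 2, P.m + 2, fun k =>
    if k = 0 then P.m + 1
    else if k = P.m + 1 then 0
    else if k = P.m + 2 then 2 * P.n + 3
    else if k = 2 * P.n + 3 then P.m + 2
    else if k ≤ P.m then newlab P.m (P.f (k - 1))
    else if k ≤ 2 * P.n + 2 then newlab P.m (P.f (k - 3))
    else k⟩

/-- `s` is the shape of the 2-backbone matching `M`: iteratively collapse stacks and
delete 1-arcs until none remains, then add a rainbow over each backbone. -/
def ShapeOf (M s : TwoD) : Prop :=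
  ∃ P : TwoD, Relation.ReflTransGen Step M P ∧ Reduced P ∧ s = plant P

/-- `q_s(n)`: the number of 2-backbone matchings with `n` arcs whose shape is `s`. -/
def fiberCount (s : TwoD) (n : ℕ) : ℕ :=
  Set.ncard {M : TwoD | M.WF ∧ M.n = n ∧ ShapeOf M s}

/-- `w_g(n)`: the number of connected 2-backbone matchings with `n` arcs and genus `g`. -/
def wCount (g n : ℕ) : ℕ :=
  Set.ncard {M : TwoD | M.WF ∧ M.Connected ∧ M.HasGenus g ∧ M.n = n}

/-- `W_g(z) = Σ_n w_g(n) zⁿ`, as a formal power series. -/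
def Wseries (g : ℕ) : PowerSeries ℤ := PowerSeries.mk fun n => (wCount g n : ℤ)

/-- The Catalan generating function `C₀(z) = Σ_n Catalan(n) zⁿ`. -/
def catGF : PowerSeries ℤ := PowerSeries.mk fun n => (catalan n : ℤ)

/-- `q̃_g(l)`: the number of connected 2-backbone shapes of genus `g` having `l` arcs
besides their two rainbows. -/
def qlCount (g l : ℕ) : ℕ := qCount g (l + 2)

end

noncomputable section

section InsDel
variable {a b : ℕ} (hab : a < b)

lemma insTwo_ne_a (k : ℕ) : insTwo a b k ≠ a := by unfold insTwo; split_ifs <;> omega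
lemma insTwo_ne_b (hab : a < b) (k : ℕ) : insTwo a b k ≠ b := by
  unfold insTwo; split_ifs <;> omega
lemma delTwo_insTwo (hab : a < b) (k : ℕ) : delTwo a b (insTwo a b k) = k := by
  unfold insTwo delTwo; split_ifs <;> omega
lemma insTwo_delTwo (hab : a < b) {k : ℕ} (h1 : k ≠ a) (h2 : k ≠ b) :
    insTwo a b (delTwo a b k) = k := by
  unfold insTwo delTwo; split_ifs <;> omega
lemma insTwo_lt_insTwo (hab : a < b) {k l : ℕ} (h : k < l) : insTwo a b k < insTwo a b l := by
  unfold insTwo; split_ifs <;> omega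
lemma delTwo_inj (hab : a < b) {k l : ℕ} (hk1 : k ≠ a) (hk2 : k ≠ b) (hl1 : l ≠ a)
    (hl2 : l ≠ b) (h : delTwo a b k = delTwo a b l) : k = l := by
  have := insTwo_delTwo hab hk1 hk2
  have := insTwo_delTwo hab hl1 hl2
  rw [h] at *; omega
end InsDel

section Gamma
lemma gammaOne_inj (k : ℕ) : Function.Injective (gammaOne k) := by
  intro i j h; unfold gammaOne at h; split_ifs at h <;> omega
lemma gammaOne_lt {k i : ℕ} (hi : i < k) : gammaOne k i < k := by
  unfold gammaOne; split_ifs <;> omega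
end Gamma

section Orbit
variable {f : ℕ → ℕ} {S : Set ℕ} {x y z : ℕ}

lemma mem_orbitOf_self (f : ℕ → ℕ) (x : ℕ) : x ∈ orbitOf f x := ⟨0, rfl⟩

lemma orbitOf_apply_mem (h : y ∈ orbitOf f x) : f y ∈ orbitOf f x := by
  obtain ⟨j, rfl⟩ := h; exact ⟨j + 1, by rw [Function.iterate_succ_apply']⟩

lemma orbitOf_trans (h1 : y ∈ orbitOf f x) (h2 : z ∈ orbitOf f y) : z ∈ orbitOf f x := by
  obtain ⟨j, rfl⟩ := h1; obtain ⟨k, rfl⟩ := h2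
  exact ⟨k + j, by rw [Function.iterate_add_apply]⟩

lemma iterate_mem_of_closed (hS : ∀ y ∈ S, f y ∈ S) (hx : x ∈ S) (n : ℕ) : f^[n] x ∈ S := by
  induction n with
  | zero => exact hx
  | succ n ih => rw [Function.iterate_succ_apply']; exact hS _ ih

lemma orbitOf_subset (hS : ∀ y ∈ S, f y ∈ S) (hx : x ∈ S) : orbitOf f x ⊆ S := by
  rintro _ ⟨j, rfl⟩; exact iterate_mem_of_closed hS hx j

lemma iterate_cancel (hS : ∀ y ∈ S, f y ∈ S) (hinj : Set.InjOn f S) (hx : x ∈ S) (hy : y ∈ S)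
    (n : ℕ) (h : f^[n] x = f^[n] y) : x = y := by
  induction n generalizing x y with
  | zero => exact h
  | succ n ih =>
    rw [Function.iterate_succ_apply, Function.iterate_succ_apply] at h
    exact hinj hx hy (ih (hS _ hx) (hS _ hy) h)

lemma exists_period (hfin : S.Finite) (hS : ∀ y ∈ S, f y ∈ S) (hinj : Set.InjOn f S)
    (hx : x ∈ S) : ∃ p, 0 < p ∧ f^[p] x = x := by
  haveI := hfin.to_subtype
  obtain ⟨i, j, hne, heq⟩ := Finite.exists_ne_map_eq_of_infinite
    (fun n : ℕ => (⟨f^[n] x, iterate_mem_of_closed hS hx n⟩ : S))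
  simp only [Subtype.mk.injEq] at heq
  rcases Nat.lt_or_ge i j with hij | hij
  · refine ⟨j - i, by omega, ?_⟩
    have h2 : f^[i + (j - i)] x = f^[i] (f^[j-i] x) := Function.iterate_add_apply f i (j-i) x
    have h3 : i + (j - i) = j := by omega
    rw [h3, ← heq] at h2
    exact (iterate_cancel hS hinj (iterate_mem_of_closed hS hx _) hx i h2.symm)
  · have hij' : j < i := by omega
    refine ⟨i - j, by omega, ?_⟩
    have h2 : f^[j + (i - j)] x = f^[j] (f^[i-j] x) := Function.iterate_add_apply f j (i-j) x
    have h3 : j + (i - j) = i := by omega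
    rw [h3, heq] at h2
    exact (iterate_cancel hS hinj (iterate_mem_of_closed hS hx _) hx j h2.symm)

lemma iterate_period_mul {p : ℕ} (hp : f^[p] x = x) (m : ℕ) : f^[m * p] x = x := by
  induction m with
  | zero => simp
  | succ m ih =>
    have : (m + 1) * p = m * p + p := by ring
    rw [this, Function.iterate_add_apply, hp, ih]

lemma mem_orbitOf_symm (hfin : S.Finite) (hS : ∀ y ∈ S, f y ∈ S) (hinj : Set.InjOn f S)
    (hx : x ∈ S) (hy : y ∈ orbitOf f x) : x ∈ orbitOf f y := by
  obtain ⟨j, rfl⟩ := hy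
  obtain ⟨p, hp0, hp⟩ := exists_period hfin hS hinj hx
  refine ⟨j * p - j, ?_⟩
  have h2 : f^[(j * p - j) + j] x = f^[j*p-j] (f^[j] x) := Function.iterate_add_apply f _ j x
  have hj : j ≤ j * p := Nat.le_mul_of_pos_right j hp0
  have h3 : (j * p - j) + j = j * p := by omega
  rw [h3, iterate_period_mul hp j] at h2
  exact h2.symm

lemma orbitOf_eq_of_mem (hfin : S.Finite) (hS : ∀ y ∈ S, f y ∈ S) (hinj : Set.InjOn f S)
    (hx : x ∈ S) (hy : y ∈ orbitOf f x) : orbitOf f x = orbitOf f y := by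
  apply Set.Subset.antisymm
  · intro z hz
    exact orbitOf_trans (mem_orbitOf_symm hfin hS hinj hx hy) hz
  · intro z hz
    exact orbitOf_trans hy hz
end Orbit

def addArc (f : ℕ → ℕ) (a b : ℕ) : ℕ → ℕ := fun k =>
  if k = a then b else if k = b then a else insTwo a b (f (delTwo a b k))

structure Ctx where
  N : ℕ
  f : ℕ → ℕ
  hN : 3 ≤ N
  hlt : ∀ i, i < 2*N → f i < 2*N
  hid : ∀ i, 2*N ≤ i → f i = i
  hinv : ∀ i, f (f i) = i
  hfpf : ∀ i, i < 2*N → f i ≠ i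
  hrb : f 0 = 2*N - 1
  hone : ∀ i, i < 2*N → f i = i + 1 → i = 0 ∧ i + 1 = 2*N - 1
  hstk : ∀ i j, i < 2*N → f i = j → i+1 < 2*N → f (i+1) = j - 1 → ¬ (i + 1 < j - 1)
  hA : f (f 1 + 1) = 2*N - 2

namespace Ctx
variable (C : Ctx)

def a : ℕ := C.f 1 + 1
def b : ℕ := 2*C.N - 2

lemma finj : Function.Injective C.f := fun x y h => by
  have h1 := C.hinv x; rw [h, C.hinv] at h1; exact h1.symm

lemma f_top : C.f (2*C.N - 1) = 0 := by
  have := C.hinv 0; rwa [C.hrb] at this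

lemma fa : C.f C.a = C.b := C.hA

lemma fb : C.f C.b = C.a := by
  have := C.hinv C.a; rwa [C.fa] at this

lemma fa1 : C.f (C.a - 1) = 1 := by
  have : C.a - 1 = C.f 1 := by simp [a]
  rw [this]; exact C.hinv 1

lemma f1_facts : 3 ≤ C.f 1 ∧ C.f 1 + 5 ≤ 2*C.N := by
  have hN := C.hN
  have h2N : (1:ℕ) < 2*C.N := by omega
  have hlt1 := C.hlt 1 h2N
  have hne1 : C.f 1 ≠ 1 := C.hfpf 1 h2N
  have hne0 : C.f 1 ≠ 0 := by
    intro h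
    have := C.hinv 1
    rw [h, C.hrb] at this
    omega
  have hne2 : C.f 1 ≠ 2 := by
    intro h
    have := C.hone 1 h2N (by omega)
    omega
  have hnetop : C.f 1 ≠ 2*C.N - 1 := by
    intro h
    have := C.hinv 1
    rw [h, C.f_top] at this
    omega
  have hne2N2 : C.f 1 ≠ 2*C.N - 2 := by
    intro h
    have hfa := C.hA
    rw [h] at hfa
    have h1 : 2*C.N - 2 + 1 = 2*C.N - 1 := by omega
    rw [h1, C.f_top] at hfa
    omega
  have hne2N3 : C.f 1 ≠ 2*C.N - 3 := by
    intro h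
    have hfa := C.hA
    rw [h] at hfa
    have h1 : 2*C.N - 3 + 1 = 2*C.N - 2 := by omega
    rw [h1] at hfa
    exact C.hfpf (2*C.N - 2) (by omega) hfa
  have hne2N4 : C.f 1 ≠ 2*C.N - 4 := by
    intro h
    have hfa := C.hA
    rw [h] at hfa
    have h1 : 2*C.N - 4 + 1 = 2*C.N - 3 := by omega
    rw [h1] at hfa
    have := C.hone (2*C.N - 3) (by omega) (by omega)
    omega
  omega

lemma ha4 : 4 ≤ C.a := by have := C.f1_facts; simp only [a]; omega
lemma hab2 : C.a + 2 ≤ C.b := by have := C.f1_facts; simp only [a, b]; omega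
lemma hab : C.a < C.b := by have := C.hab2; omega
lemma hbval : C.b + 2 = 2*C.N := by have := C.hN; simp only [b]; omega

/-- the new involution -/
def g : ℕ → ℕ := deleteTwo C.f C.a C.b

lemma g_def (k : ℕ) : C.g k = delTwo C.a C.b (C.f (insTwo C.a C.b k)) := rfl

lemma f_insTwo_ne_a (k : ℕ) : C.f (insTwo C.a C.b k) ≠ C.a := by
  intro h
  have := C.hinv (insTwo C.a C.b k)
  rw [h, C.fa] at this
  exact insTwo_ne_b C.hab k this.symm

lemma f_insTwo_ne_b (k : ℕ) : C.f (insTwo C.a C.b k) ≠ C.b := by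
  intro h
  have := C.hinv (insTwo C.a C.b k)
  rw [h, C.fb] at this
  exact insTwo_ne_a k this.symm

lemma g_invol (k : ℕ) : C.g (C.g k) = k := by
  rw [g_def, g_def, insTwo_delTwo C.hab (C.f_insTwo_ne_a k) (C.f_insTwo_ne_b k),
    C.hinv, delTwo_insTwo C.hab]

/-- reconstruction: adding the arc back gives `f`. -/
lemma addArc_g : addArc C.g C.a C.b = C.f := by
  funext k
  unfold addArc
  split_ifs with h1 h2
  · rw [h1, C.fa]
  · rw [h2, C.fb]
  · rw [g_def, insTwo_delTwo C.hab h1 h2]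
    have hfka : C.f k ≠ C.a := by
      intro h; apply h2
      have hk := C.hinv k; rw [h, C.fa] at hk; exact hk.symm
    have hfkb : C.f k ≠ C.b := by
      intro h; apply h1
      have hk := C.hinv k; rw [h, C.fb] at hk; exact hk.symm
    exact insTwo_delTwo C.hab hfka hfkb

end Ctx


section InsDelMore
variable {a b : ℕ}
lemma insTwo_low {k : ℕ} (h : k < a) : insTwo a b k = k := by unfold insTwo; split_ifs <;> omega
lemma insTwo_mid {k : ℕ} (h1 : a ≤ k) (h2 : k + 1 < b) : insTwo a b k = k + 1 := by
  unfold insTwo; split_ifs <;> omega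
lemma insTwo_high {k : ℕ} (h1 : a ≤ k) (h2 : b ≤ k + 1) : insTwo a b k = k + 2 := by
  unfold insTwo; split_ifs <;> omega
lemma insTwo_le (k : ℕ) : insTwo a b k ≤ k + 2 := by unfold insTwo; split_ifs <;> omega
lemma insTwo_ge (k : ℕ) : k ≤ insTwo a b k := by unfold insTwo; split_ifs <;> omega
lemma insTwo_succ (hab : a + 2 ≤ b) {i : ℕ} (h1 : i ≠ a - 1) (h2 : i ≠ b - 2) (ha : 1 ≤ a) :
    insTwo a b (i + 1) = insTwo a b i + 1 := by
  unfold insTwo; split_ifs <;> omega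
lemma delTwo_low (hab : a < b) {k : ℕ} (h : k ≤ a) : delTwo a b k = k := by
  unfold delTwo; split_ifs <;> omega
lemma delTwo_mid {k : ℕ} (h1 : a < k) (h2 : k ≤ b) : delTwo a b k = k - 1 := by
  unfold delTwo; split_ifs <;> omega
lemma delTwo_high {k : ℕ} (h1 : a < k) (h2 : b < k) : delTwo a b k = k - 2 := by
  unfold delTwo; split_ifs <;> omega
end InsDelMore

namespace Ctx
variable (C : Ctx)

lemma g_arc_iff {i j : ℕ} (hga : C.g i = j) : C.f (insTwo C.a C.b i) = insTwo C.a C.b j := by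
  rw [g_def] at hga
  have h := insTwo_delTwo C.hab (C.f_insTwo_ne_a i) (C.f_insTwo_ne_b i)
  rw [hga] at h
  exact h.symm

lemma g_id (k : ℕ) (hk : 2*C.N - 2 ≤ k) : C.g k = k := by
  have hab := C.hab2
  have hb := C.hbval
  have h1 : insTwo C.a C.b k = k + 2 := insTwo_high (by omega) (by omega)
  rw [g_def, h1, C.hid (k+2) (by omega), delTwo_high (by omega) (by omega)]
  omega

lemma g_lt (k : ℕ) (hk : k < 2*C.N - 2) : C.g k < 2*C.N - 2 := by
  have hab := C.hab2
  have hb := C.hbval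
  have hu : insTwo C.a C.b k < 2*C.N := by have := insTwo_le (a := C.a) (b := C.b) k; omega
  have hw := C.hlt _ hu
  have hwa := C.f_insTwo_ne_a k
  have hwb := C.f_insTwo_ne_b k
  rw [g_def]
  unfold delTwo
  split_ifs <;> omega

lemma g_fpf (k : ℕ) (hk : k < 2*C.N - 2) : C.g k ≠ k := by
  intro h
  have h2 := C.g_arc_iff h
  have hu : insTwo C.a C.b k < 2*C.N := by
    have := insTwo_le (a := C.a) (b := C.b) k; have := C.hbval; omega
  exact C.hfpf _ hu h2

lemma g_rb : C.g 0 = 2*C.N - 3 := by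
  have hab := C.hab2
  have hb := C.hbval
  have ha := C.ha4
  rw [g_def, insTwo_low (by omega), C.hrb, delTwo_high (by omega) (by omega)]
  omega

lemma g_one (i : ℕ) (hi : i < 2*C.N - 2) (h : C.g i = i + 1) : False := by
  have hab := C.hab2
  have hb := C.hbval
  have ha := C.ha4
  have hw := C.g_arc_iff h
  rcases Nat.lt_or_ge (i+1) C.a with h1 | h1
  · rw [insTwo_low (by omega), insTwo_low (by omega)] at hw
    have := C.hone i (by omega) hw
    omega
  rcases Nat.eq_or_lt_of_le h1 with h1 | h1
  · -- i + 1 = a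
    rw [insTwo_low (by omega), insTwo_mid (by omega) (by omega)] at hw
    have : i = C.a - 1 := by omega
    rw [this, C.fa1] at hw
    omega
  rcases Nat.lt_or_ge (i+2) C.b with h2 | h2
  · rw [insTwo_mid (by omega) (by omega), insTwo_mid (by omega) (by omega)] at hw
    have := C.hone (i+1) (by omega) (by rw [hw])
    omega
  rcases Nat.eq_or_lt_of_le h2 with h2 | h2
  · -- i + 2 = b
    rw [insTwo_mid (by omega) (by omega), insTwo_high (by omega) (by omega)] at hw
    have h3 : i + 1 + 2 = 2*C.N - 1 := by omega
    rw [h3] at hw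
    have := C.finj (a₂ := 0) (by rw [hw, C.hrb])
    omega
  · -- i ≥ b - 1, so i = 2N - 3
    have h3 : insTwo C.a C.b i = 2*C.N - 1 := by rw [insTwo_high (by omega) (by omega)]; omega
    have h4 : insTwo C.a C.b (i+1) = 2*C.N := by rw [insTwo_high (by omega) (by omega)]; omega
    rw [h3, h4, C.f_top] at hw
    omega

lemma g_stk (i j : ℕ) (hi : i < 2*C.N - 2) (h1 : C.g i = j) (hi2 : i + 1 < 2*C.N - 2)
    (h2 : C.g (i+1) = j - 1) (hlt : i + 1 < j - 1) : False := by
  have hab := C.hab2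
  have hb := C.hbval
  have ha := C.ha4
  have hw1 := C.g_arc_iff h1
  have hw2 := C.g_arc_iff h2
  by_cases hia : i = C.a - 1
  · -- f (a-1) = 1 = ins j , so j = 1
    rw [hia, insTwo_low (by omega), C.fa1] at hw1
    have : j < C.a := by by_contra hc; have := insTwo_ge (a := C.a) (b := C.b) j; omega
    rw [insTwo_low this] at hw1
    omega
  by_cases hib : i = C.b - 2
  · -- ins (i+1) = b + 1 = 2N - 1, f (2N-1) = 0 = ins (j-1), so j - 1 = 0
    have h3 : insTwo C.a C.b (i+1) = 2*C.N - 1 := by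
      rw [insTwo_high (by omega) (by omega)]; omega
    rw [h3, C.f_top] at hw2
    have : j - 1 < C.a := by
      by_contra hc; have := insTwo_ge (a := C.a) (b := C.b) (j-1); omega
    rw [insTwo_low this] at hw2
    omega
  have hsi : insTwo C.a C.b (i+1) = insTwo C.a C.b i + 1 :=
    insTwo_succ C.hab2 hia hib (by omega)
  by_cases hja : j = C.a
  · rw [hja] at hw1 hw2
    have e1 : insTwo C.a C.b (C.a - 1) = C.a - 1 := insTwo_low (by omega)
    rw [e1] at hw2
    have e2 : insTwo C.a C.b (i+1) = 1 := by
      have h5 := C.hinv (insTwo C.a C.b (i+1))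
      rw [hw2, C.fa1] at h5
      exact h5.symm
    have hi0 : i = 0 := by have := insTwo_ge (a := C.a) (b := C.b) (i+1); omega
    rw [hi0, insTwo_low (by omega), C.hrb, insTwo_mid (le_refl _) (by omega)] at hw1
    omega
  by_cases hjb : j = C.b - 1
  · have h3 : insTwo C.a C.b j = 2*C.N - 1 := by
      rw [hjb, insTwo_high (by omega) (by omega)]; omega
    rw [h3] at hw1
    have h4 : insTwo C.a C.b i = 0 := by
      have h5 := C.hinv (insTwo C.a C.b i)
      rw [hw1, C.f_top] at h5
      omega
    have hi0 : i = 0 := by have := insTwo_ge (a := C.a) (b := C.b) i; omega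
    have h6 : insTwo C.a C.b (i+1) = 1 := by rw [hi0]; exact insTwo_low (by omega)
    rw [h6, hjb] at hw2
    have h7 : insTwo C.a C.b (C.b - 1 - 1) = C.b - 1 := by
      rw [insTwo_mid (by omega) (by omega)]; omega
    rw [h7] at hw2
    have h8 : C.f 1 = C.a - 1 := by simp only [a]; omega
    omega
  · -- generic case: old stack
    have hj1 : 1 ≤ j := by omega
    have hsj : insTwo C.a C.b (j - 1 + 1) = insTwo C.a C.b (j-1) + 1 :=
      insTwo_succ C.hab2 (by omega) (by omega) (by omega)
    have hjj : j - 1 + 1 = j := by omega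
    rw [hjj] at hsj
    have hI : insTwo C.a C.b i < 2*C.N := by
      have := insTwo_le (a := C.a) (b := C.b) i; omega
    have hI2 : insTwo C.a C.b i + 1 < 2*C.N := by
      have := insTwo_le (a := C.a) (b := C.b) (i+1); omega
    apply C.hstk (insTwo C.a C.b i) (insTwo C.a C.b j) hI hw1 hI2
    · rw [← hsi]
      rw [hw2]
      omega
    · have := insTwo_lt_insTwo C.hab (show i + 1 < j - 1 by omega)
      omega

lemma g_isB (h : C.g (C.g 1 + 1) = 2*C.N - 4) : False := by
  have hab := C.hab2
  have hb := C.hbval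
  have ha := C.ha4
  have hg1 : C.g 1 = C.a - 1 := by
    rw [g_def, insTwo_low (by omega)]
    have : C.f 1 = C.a - 1 := by simp only [a]; omega
    rw [this, delTwo_low C.hab (by omega)]
  rw [hg1] at h
  have h2 : C.a - 1 + 1 = C.a := by omega
  rw [h2] at h
  have hw := C.g_arc_iff h
  rw [insTwo_mid (le_refl _) (by omega)] at hw
  have h3 : insTwo C.a C.b (2*C.N - 4) = 2*C.N - 3 := by
    rw [insTwo_mid (by omega) (by omega)]; omega
  rw [h3] at hw
  rcases Nat.eq_or_lt_of_le hab with hc | hc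
  · exact C.hfpf (C.a + 1) (by omega) (by rw [hw]; omega)
  · exact C.hstk C.a C.b (by omega) C.fa (by omega) (by rw [hw]; omega) (by omega)

end Ctx


section GammaMore
lemma gammaOne_succ {k i : ℕ} (h1 : i + 1 < k) : gammaOne k i = i + 1 := by
  unfold gammaOne; split_ifs <;> omega
lemma gammaOne_wrap {k i : ℕ} (h : i + 1 = k) : gammaOne k i = 0 := by
  unfold gammaOne; split_ifs <;> omega
lemma delTwo_le {a b k : ℕ} : delTwo a b k ≤ k := by unfold delTwo; split_ifs <;> omega
end GammaMore

namespace Ctx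
variable (C : Ctx)

def bdD : ℕ → ℕ := C.f ∘ gammaOne (2*C.N)
def bd2 : ℕ → ℕ := C.g ∘ gammaOne (2*C.N - 2)
def B : ℕ → ℕ := fun x =>
  if x = C.a - 1 then C.f (C.a + 1) else if x = C.b - 1 then 0 else C.bdD x
def S0 : Set ℕ := {x | x < 2*C.N ∧ x ≠ C.a ∧ x ≠ C.b}
def OA : Set ℕ := orbitOf C.bdD C.a
def Ob : Set ℕ := orbitOf C.bdD C.b
def Mset : Set ℕ := insert 0 (insert (C.a - 1) (C.OA \ {C.a}))

lemma bdD_eq {x : ℕ} (h : x + 1 < 2*C.N) : C.bdD x = C.f (x+1) := by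
  unfold bdD; simp only [Function.comp_apply, gammaOne_succ h]

lemma bdD_top : C.bdD (2*C.N - 1) = 2*C.N - 1 := by
  have hN := C.hN
  unfold bdD
  simp only [Function.comp_apply, gammaOne_wrap (by omega : 2*C.N - 1 + 1 = 2*C.N), C.hrb]

lemma bdD_lt {x : ℕ} (h : x < 2*C.N) : C.bdD x < 2*C.N := C.hlt _ (gammaOne_lt h)

lemma bdD_inj : Function.Injective C.bdD := C.finj.comp (gammaOne_inj _)

lemma bdD_closed : ∀ y ∈ Set.Iio (2*C.N), C.bdD y ∈ Set.Iio (2*C.N) := fun _ h => C.bdD_lt h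

lemma bd_0 : C.bdD 0 = C.a - 1 := by
  have hN := C.hN
  rw [C.bdD_eq (by omega)]
  show C.f 1 = C.a - 1
  simp only [a]
  omega

lemma bd_b : C.bdD C.b = 0 := by
  have hb := C.hbval
  rw [C.bdD_eq (by omega)]
  have : C.b + 1 = 2*C.N - 1 := by omega
  rw [this, C.f_top]

lemma bd_am : C.bdD (C.a - 1) = C.b := by
  have ha := C.ha4; have hb := C.hbval; have hab := C.hab2
  rw [C.bdD_eq (by omega)]
  have : C.a - 1 + 1 = C.a := by omega
  rw [this, C.fa]

lemma bd_bm : C.bdD (C.b - 1) = C.a := by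
  have hb := C.hbval; have hab := C.hab2
  rw [C.bdD_eq (by omega)]
  have : C.b - 1 + 1 = C.b := by omega
  rw [this, C.fb]

lemma bd_a : C.bdD C.a = C.f (C.a + 1) := by
  have hb := C.hbval; have hab := C.hab2
  rw [C.bdD_eq (by omega)]

lemma bdD_eq_a {x : ℕ} (h : C.bdD x = C.a) : x = C.b - 1 := C.bdD_inj (by rw [h, C.bd_bm])

lemma bdD_eq_b {x : ℕ} (h : C.bdD x = C.b) : x = C.a - 1 := C.bdD_inj (by rw [h, C.bd_am])

-- orbit lemmas specialized to bdD on Iio (2N)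
lemma orbit_eq' {x y : ℕ} (hx : x < 2*C.N) (hy : y ∈ orbitOf C.bdD x) :
    orbitOf C.bdD x = orbitOf C.bdD y :=
  orbitOf_eq_of_mem (Set.finite_Iio _) C.bdD_closed (C.bdD_inj.injOn) hx hy

lemma mem_Ob_0 : 0 ∈ C.Ob := ⟨1, by simp [C.bd_b]⟩

lemma mem_Ob_am : C.a - 1 ∈ C.Ob := by
  refine ⟨2, ?_⟩
  show C.bdD (C.bdD C.b) = C.a - 1
  rw [C.bd_b, C.bd_0]

lemma OA_def : C.OA = orbitOf C.bdD C.a := rfl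
lemma Ob_def : C.Ob = orbitOf C.bdD C.b := rfl

lemma Ob_sub : C.Ob ⊆ {C.b, 0, C.a - 1} := by
  apply orbitOf_subset _ (by simp)
  intro y hy
  simp only [Set.mem_insert_iff, Set.mem_singleton_iff] at hy ⊢
  rcases hy with h | h | h
  · rw [h, C.bd_b]; tauto
  · rw [h, C.bd_0]; tauto
  · rw [h, C.bd_am]; tauto

lemma a_lt_2N : C.a < 2*C.N := by have := C.hab2; have := C.hbval; omega
lemma b_lt_2N : C.b < 2*C.N := by have := C.hbval; omega

lemma a_notmem_Ob : C.a ∉ C.Ob := by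
  intro h
  have h2 := C.Ob_sub h
  simp only [Set.mem_insert_iff, Set.mem_singleton_iff] at h2
  have ha := C.ha4; have hab := C.hab2
  omega

lemma OA_sub_Iio : C.OA ⊆ Set.Iio (2*C.N) :=
  orbitOf_subset C.bdD_closed (C.a_lt_2N)

lemma Ob_sub_Iio : C.Ob ⊆ Set.Iio (2*C.N) :=
  orbitOf_subset C.bdD_closed (C.b_lt_2N)

lemma notMem_Ob_of_mem_OA {x : ℕ} (hx : x ∈ C.OA) : x ∉ C.Ob := by
  intro hb
  apply C.a_notmem_Ob
  have h1 : C.OA = orbitOf C.bdD x := C.orbit_eq' C.a_lt_2N hx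
  have h2 : C.Ob = orbitOf C.bdD x := C.orbit_eq' C.b_lt_2N hb
  rw [h2, ← h1]
  exact mem_orbitOf_self _ _

lemma am_notmem_OA : C.a - 1 ∉ C.OA := fun h => C.notMem_Ob_of_mem_OA h C.mem_Ob_am

lemma bm_mem_OA : C.b - 1 ∈ C.OA := by
  have hb := C.hbval
  have h1 : C.a ∈ orbitOf C.bdD (C.b - 1) := ⟨1, by simp [C.bd_bm]⟩
  have h2 := C.orbit_eq' (show C.b - 1 < 2*C.N by omega) h1
  rw [C.OA_def, ← h2]
  exact mem_orbitOf_self _ _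

end Ctx


namespace Ctx
variable (C : Ctx)

lemma S0_def {x : ℕ} : x ∈ C.S0 ↔ x < 2*C.N ∧ x ≠ C.a ∧ x ≠ C.b := Iff.rfl

lemma S0_fin : C.S0.Finite := Set.Finite.subset (Set.finite_Iio (2*C.N)) (fun x hx => hx.1)

lemma zero_mem_S0 : 0 ∈ C.S0 := by
  have := C.ha4; have := C.hab2
  exact ⟨by have := C.hbval; omega, by omega, by omega⟩

lemma B_am : C.B (C.a - 1) = C.f (C.a + 1) := by unfold B; simp

lemma B_bm : C.B (C.b - 1) = 0 := by
  have := C.hab2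
  unfold B
  rw [if_neg (by omega), if_pos rfl]

lemma B_other {x : ℕ} (h1 : x ≠ C.a - 1) (h2 : x ≠ C.b - 1) : C.B x = C.bdD x := by
  unfold B; rw [if_neg h1, if_neg h2]

lemma fa1_ne_a : C.f (C.a + 1) ≠ C.a := by
  intro h
  have h2 : C.f (C.a + 1) = C.f C.b := by rw [h, C.fb]
  have := C.finj h2
  have := C.hab2
  omega

lemma fa1_ne_b : C.f (C.a + 1) ≠ C.b := by
  intro h
  have h2 : C.f (C.a + 1) = C.f C.a := by rw [h, C.fa]
  have := C.finj h2
  omega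

lemma B_mem_S0 {x : ℕ} (hx : x ∈ C.S0) : C.B x ∈ C.S0 := by
  obtain ⟨hx1, hx2, hx3⟩ := hx
  have hb := C.hbval; have hab := C.hab2; have ha := C.ha4
  by_cases h1 : x = C.a - 1
  · rw [h1, C.B_am]
    exact ⟨C.hlt _ (by omega), C.fa1_ne_a, C.fa1_ne_b⟩
  by_cases h2 : x = C.b - 1
  · rw [h2, C.B_bm]
    exact ⟨by omega, by omega, by omega⟩
  · rw [C.B_other h1 h2]
    refine ⟨C.bdD_lt hx1, ?_, ?_⟩
    · intro h; exact h2 (C.bdD_eq_a h)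
    · intro h; exact h1 (C.bdD_eq_b h)

def sig (z : ℕ) : ℕ := if z = C.a - 1 then C.a else if z = C.b - 1 then C.b else z

lemma B_eq_bd_sig {z : ℕ} : C.B z = C.bdD (C.sig z) := by
  have hab := C.hab2
  unfold B sig
  by_cases h1 : z = C.a - 1
  · rw [if_pos h1, if_pos h1, C.bd_a]
  by_cases h2 : z = C.b - 1
  · rw [if_neg h1, if_pos h2, if_neg h1, if_pos h2, C.bd_b]
  · rw [if_neg h1, if_neg h2, if_neg h1, if_neg h2]

lemma B_injOn : Set.InjOn C.B C.S0 := by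
  intro x hx y hy h
  rw [C.B_eq_bd_sig, C.B_eq_bd_sig] at h
  have h2 := C.bdD_inj h
  obtain ⟨_, hx2, hx3⟩ := hx
  obtain ⟨_, hy2, hy3⟩ := hy
  have hab := C.hab2; have ha := C.ha4
  unfold sig at h2
  split_ifs at h2 <;> omega

-- Claim 1 : for x outside both orbits, B-orbit = bdD-orbit
lemma B_iter_eq {x : ℕ} (hx : x < 2*C.N) (hA : x ∉ C.OA) (hB : x ∉ C.Ob) (j : ℕ) :
    C.B^[j] x = C.bdD^[j] x := by
  induction j with
  | zero => rfl
  | succ j ih =>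
    rw [Function.iterate_succ_apply', Function.iterate_succ_apply', ih]
    set z := C.bdD^[j] x with hz
    have hzo : z ∈ orbitOf C.bdD x := ⟨j, rfl⟩
    have hza : z ≠ C.a - 1 := by
      intro h
      apply hB
      have h1 := C.orbit_eq' hx hzo
      rw [h] at h1
      have h2 := C.orbit_eq' C.b_lt_2N C.mem_Ob_am
      rw [C.Ob_def] at *
      rw [h2] at *
      rw [← h1]
      exact mem_orbitOf_self _ _
    have hzb : z ≠ C.b - 1 := by
      intro h
      apply hA
      have h1 := C.orbit_eq' hx hzo
      rw [h] at h1
      have h2 := C.orbit_eq' C.a_lt_2N C.bm_mem_OA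
      rw [C.OA_def] at *
      rw [h2] at *
      rw [← h1]
      exact mem_orbitOf_self _ _
    exact C.B_other hza hzb

lemma orbit_B_eq_orbit_bd {x : ℕ} (hx : x < 2*C.N) (hA : x ∉ C.OA) (hB : x ∉ C.Ob) :
    orbitOf C.B x = orbitOf C.bdD x := by
  ext y
  exact exists_congr fun j => by rw [C.B_iter_eq hx hA hB]

end Ctx


namespace Ctx
variable (C : Ctx)

lemma Mset_sub_S0 : C.Mset ⊆ C.S0 := by
  intro y hy
  have ha := C.ha4; have hab := C.hab2; have hb := C.hbval
  rcases hy with h | h | h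
  · rw [h]; exact C.zero_mem_S0
  · rw [h]; exact ⟨by omega, by omega, by omega⟩
  · obtain ⟨h1, h2⟩ := h
    refine ⟨C.OA_sub_Iio h1, by simpa using h2, ?_⟩
    intro hc
    rw [hc] at h1
    exact C.notMem_Ob_of_mem_OA h1 (mem_orbitOf_self _ _)

lemma bd_mem_OA {y : ℕ} (h : y ∈ C.OA) : C.bdD y ∈ C.OA := orbitOf_apply_mem h

lemma bda_ne_a : C.bdD C.a ≠ C.a := by
  rw [C.bd_a]; exact C.fa1_ne_a

lemma B_closed_M : ∀ y ∈ C.Mset, C.B y ∈ C.Mset := by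
  intro y hy
  have ha := C.ha4; have hab := C.hab2; have hb := C.hbval
  rcases hy with h | h | h
  · -- y = 0
    rw [h, C.B_other (by omega) (by omega), C.bd_0]
    right; left; rfl
  · -- y = a - 1
    rw [h, C.B_am, ← C.bd_a]
    right; right
    exact ⟨C.bd_mem_OA (mem_orbitOf_self _ _), by simpa using C.bda_ne_a⟩
  · -- y ∈ OA \ {a}
    obtain ⟨h1, h2⟩ := h
    simp only [Set.mem_singleton_iff] at h2
    by_cases hyb : y = C.b - 1
    · rw [hyb, C.B_bm]; left; rfl
    · have hya : y ≠ C.a - 1 := by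
        intro hc; rw [hc] at h1; exact C.am_notmem_OA h1
      rw [C.B_other hya hyb]
      right; right
      refine ⟨C.bd_mem_OA h1, ?_⟩
      simp only [Set.mem_singleton_iff]
      intro hc
      exact hyb (C.bdD_eq_a hc)

lemma zero_mem_M : 0 ∈ C.Mset := by left; rfl

lemma orbitB0_sub_Mset : orbitOf C.B 0 ⊆ C.Mset := orbitOf_subset C.B_closed_M C.zero_mem_M

lemma B0 : C.B 0 = C.a - 1 := by
  have ha := C.ha4; have hab := C.hab2; have hb := C.hbval
  rw [C.B_other (by omega) (by omega), C.bd_0]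

lemma B1 : C.B (C.a - 1) = C.bdD C.a := by rw [C.B_am, C.bd_a]

lemma iterate_mod {f : ℕ → ℕ} {x : ℕ} {p : ℕ} (hp : f^[p] x = x) (j : ℕ) :
    f^[j] x = f^[j % p] x := by
  conv_lhs => rw [← Nat.mod_add_div j p]
  rw [Function.iterate_add_apply]
  congr 1
  rw [Nat.mul_comm]
  exact iterate_period_mul hp _

lemma Mset_sub_orbitB0 : C.Mset ⊆ orbitOf C.B 0 := by
  have ha := C.ha4; have hab := C.hab2; have hb := C.hbval
  have hper := exists_period (Set.finite_Iio (2*C.N)) C.bdD_closed C.bdD_inj.injOn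
    (Set.mem_Iio.mpr C.a_lt_2N)
  classical
  set p := Nat.find hper with hpdef
  obtain ⟨hp0, hpp⟩ := Nat.find_spec hper
  -- all iterates bdD^[j] a for 1 ≤ j ≤ p - 1 are in the B-orbit of 0
  have key : ∀ j, 1 ≤ j → j ≤ p - 1 → C.bdD^[j] C.a ∈ orbitOf C.B 0 := by
    intro j hj1 hj2
    induction j with
    | zero => omega
    | succ j ih =>
      rcases Nat.eq_or_lt_of_le hj1 with h1 | h1
      · -- j + 1 = 1
        have : C.bdD^[1] C.a = C.B (C.B 0) := by
          rw [C.B0, C.B1]; rfl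
        rw [← h1, this]
        exact orbitOf_apply_mem (orbitOf_apply_mem (mem_orbitOf_self _ _))
      · -- j ≥ 1
        have hj : 1 ≤ j := by omega
        have ihm := ih hj (by omega)
        rw [Function.iterate_succ_apply']
        set z := C.bdD^[j] C.a with hz
        have hzA : z ∈ C.OA := ⟨j, rfl⟩
        have hza : z ≠ C.a - 1 := by
          intro hc; rw [hc] at hzA; exact C.am_notmem_OA hzA
        have hzb : z ≠ C.b - 1 := by
          intro hc
          have : C.bdD^[j+1] C.a = C.a := by
            rw [Function.iterate_succ_apply', ← hz, hc, C.bd_bm]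
          have := Nat.find_min hper (m := j + 1) (by omega)
          push_neg at this
          exact absurd ‹C.bdD^[j+1] C.a = C.a› (this (by omega))
        have : C.bdD z = C.B z := (C.B_other hza hzb).symm
        rw [this]
        exact orbitOf_apply_mem ihm
  intro y hy
  rcases hy with h | h | h
  · rw [h]; exact mem_orbitOf_self _ _
  · rw [h, ← C.B0]; exact orbitOf_apply_mem (mem_orbitOf_self _ _)
  · obtain ⟨h1, h2⟩ := h
    simp only [Set.mem_singleton_iff] at h2
    obtain ⟨j, hj⟩ := h1
    have hmod : C.bdD^[j % p] C.a = y := by rw [← iterate_mod hpp]; exact hj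
    have hj0 : j % p ≠ 0 := by
      intro hc; rw [hc] at hmod; exact h2 hmod.symm
    have hjp : j % p < p := Nat.mod_lt _ hp0
    rw [← hmod]
    exact key (j % p) (by omega) (by omega)

lemma orbitB0_eq_Mset : orbitOf C.B 0 = C.Mset :=
  Set.Subset.antisymm C.orbitB0_sub_Mset C.Mset_sub_orbitB0

lemma orbit_B_M {x : ℕ} (hx : x ∈ C.Mset) : orbitOf C.B x = C.Mset := by
  have h1 : x ∈ orbitOf C.B 0 := C.orbitB0_eq_Mset ▸ hx
  have h2 := orbitOf_eq_of_mem C.S0_fin (fun y hy => C.B_mem_S0 hy) C.B_injOn C.zero_mem_S0 h1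
  rw [← h2, C.orbitB0_eq_Mset]

end Ctx


namespace Ctx
variable (C : Ctx)

lemma conj {x : ℕ} (hx : x ∈ C.S0) :
    C.bd2 (delTwo C.a C.b x) = delTwo C.a C.b (C.B x) := by
  obtain ⟨hx1, hx2, hx3⟩ := hx
  have ha := C.ha4; have hab := C.hab2; have hb := C.hbval
  unfold bd2
  simp only [Function.comp_apply]
  by_cases h1 : x = 2*C.N - 1
  · rw [h1, delTwo_high (by omega) (by omega)]
    have e1 : gammaOne (2*C.N - 2) (2*C.N - 1 - 2) = 0 := gammaOne_wrap (by omega)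
    rw [e1, C.g_rb]
    rw [C.B_other (by omega) (by omega), C.bdD_top, delTwo_high (by omega) (by omega)]
    omega
  by_cases h2 : x = C.a - 1
  · rw [h2, delTwo_low C.hab (by omega)]
    have e1 : gammaOne (2*C.N - 2) (C.a - 1) = C.a := by
      rw [gammaOne_succ (by omega)]; omega
    rw [e1, C.B_am]
    rw [g_def, insTwo_mid (le_refl _) (by omega)]
  by_cases h3 : x = C.b - 1
  · rw [h3, delTwo_mid (by omega) (by omega)]
    have e1 : gammaOne (2*C.N - 2) (C.b - 1 - 1) = C.b - 1 := by
      rw [gammaOne_succ (by omega)]; omega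
    rw [e1, C.B_bm, g_def, insTwo_high (by omega) (by omega)]
    have e2 : C.b - 1 + 2 = 2*C.N - 1 := by omega
    rw [e2, C.f_top]
  rcases Nat.lt_or_ge x (C.a - 1) with h4 | h4
  · -- x < a - 1
    rw [delTwo_low C.hab (by omega)]
    have e1 : gammaOne (2*C.N - 2) x = x + 1 := gammaOne_succ (by omega)
    rw [e1, C.B_other h2 h3, C.bdD_eq (by omega), g_def, insTwo_low (by omega)]
  · -- a < x ≤ b - 2
    have h5 : C.a < x ∧ x ≤ C.b - 2 := by omega
    rw [delTwo_mid (by omega) (by omega)]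
    have e1 : gammaOne (2*C.N - 2) (x - 1) = x := by
      rw [gammaOne_succ (by omega)]; omega
    rw [e1, C.B_other h2 h3, C.bdD_eq (by omega), g_def, insTwo_mid (by omega) (by omega)]

lemma conj_iter {x : ℕ} (hx : x ∈ C.S0) (j : ℕ) :
    C.bd2^[j] (delTwo C.a C.b x) = delTwo C.a C.b (C.B^[j] x) := by
  induction j with
  | zero => rfl
  | succ j ih =>
    rw [Function.iterate_succ_apply', Function.iterate_succ_apply', ih]
    exact C.conj (iterate_mem_of_closed (fun y hy => C.B_mem_S0 hy) hx j)

lemma orbit_bd2_del {x : ℕ} (hx : x ∈ C.S0) :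
    orbitOf C.bd2 (delTwo C.a C.b x) = delTwo C.a C.b '' orbitOf C.B x := by
  ext y
  constructor
  · rintro ⟨j, rfl⟩
    exact ⟨C.B^[j] x, ⟨j, rfl⟩, (C.conj_iter hx j).symm⟩
  · rintro ⟨z, ⟨j, rfl⟩, rfl⟩
    exact ⟨j, C.conj_iter hx j⟩

def Others : Set (Set ℕ) :=
  {S | ∃ x, x < 2*C.N ∧ x ∉ C.OA ∧ x ∉ C.Ob ∧ S = orbitOf C.bdD x}

lemma old_decomp :
    {S : Set ℕ | ∃ x, x < 2*C.N ∧ S = orbitOf C.bdD x} =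
      insert C.OA (insert C.Ob C.Others) := by
  ext S
  constructor
  · rintro ⟨x, hx, rfl⟩
    by_cases h1 : x ∈ C.OA
    · left; exact (C.orbit_eq' C.a_lt_2N h1).symm
    by_cases h2 : x ∈ C.Ob
    · right; left; exact (C.orbit_eq' C.b_lt_2N h2).symm
    · right; right; exact ⟨x, hx, h1, h2, rfl⟩
  · rintro (rfl | rfl | ⟨x, hx, _, _, rfl⟩)
    · exact ⟨C.a, C.a_lt_2N, rfl⟩
    · exact ⟨C.b, C.b_lt_2N, rfl⟩
    · exact ⟨x, hx, rfl⟩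

lemma others_props {S : Set ℕ} (hS : S ∈ C.Others) :
    C.a ∉ S ∧ C.b ∉ S ∧ C.a - 1 ∉ S ∧ S ⊆ C.S0 := by
  obtain ⟨x, hx, hA, hB, rfl⟩ := hS
  have hna : C.a ∉ orbitOf C.bdD x := by
    intro h
    apply hA
    rw [C.OA_def, ← C.orbit_eq' hx h]
    exact mem_orbitOf_self _ _
  have hnb : C.b ∉ orbitOf C.bdD x := by
    intro h
    apply hB
    rw [C.Ob_def, ← C.orbit_eq' hx h]
    exact mem_orbitOf_self _ _
  have hnam : C.a - 1 ∉ orbitOf C.bdD x := by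
    intro h
    apply hB
    have h1 := C.orbit_eq' hx h
    have h2 := C.orbit_eq' C.b_lt_2N (show C.a - 1 ∈ orbitOf C.bdD C.b from C.mem_Ob_am)
    rw [C.Ob_def, h2, ← h1]
    exact mem_orbitOf_self _ _
  refine ⟨hna, hnb, hnam, ?_⟩
  intro z hz
  refine ⟨orbitOf_subset C.bdD_closed hx hz, ?_, ?_⟩
  · intro hc; rw [hc] at hz; exact hna hz
  · intro hc; rw [hc] at hz; exact hnb hz

lemma OA_notmem : C.OA ∉ insert C.Ob C.Others := by
  rintro (h | h)
  · have : C.a ∈ C.Ob := by rw [← h]; exact mem_orbitOf_self _ _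
    exact C.a_notmem_Ob this
  · exact (C.others_props h).1 (mem_orbitOf_self _ _)

lemma Ob_notmem : C.Ob ∉ C.Others := fun h =>
  (C.others_props h).2.1 (mem_orbitOf_self _ _)

lemma others_fin : C.Others.Finite := by
  apply Set.Finite.subset ((Set.finite_Iio (2*C.N)).image (orbitOf C.bdD))
  rintro S ⟨x, hx, _, _, rfl⟩
  exact ⟨x, hx, rfl⟩

lemma new_decomp :
    {S : Set ℕ | ∃ y, y < 2*C.N - 2 ∧ S = orbitOf C.bd2 y} =
      (fun S => delTwo C.a C.b '' S) '' insert C.Mset C.Others := by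
  have ha := C.ha4; have hab := C.hab2; have hb := C.hbval
  ext S
  constructor
  · rintro ⟨y, hy, rfl⟩
    set x := insTwo C.a C.b y with hxdef
    have hx0 : x ∈ C.S0 := by
      refine ⟨?_, insTwo_ne_a y, insTwo_ne_b C.hab y⟩
      have := insTwo_le (a := C.a) (b := C.b) y; omega
    have hdel : delTwo C.a C.b x = y := delTwo_insTwo C.hab y
    by_cases h1 : x ∈ C.OA
    · refine ⟨C.Mset, by left; rfl, ?_⟩
      show delTwo C.a C.b '' C.Mset = orbitOf C.bd2 y
      rw [← C.orbit_B_M (show x ∈ C.Mset by right; right; exact ⟨h1, by simpa using hx0.2.1⟩),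
        ← C.orbit_bd2_del hx0, hdel]
    by_cases h2 : x ∈ C.Ob
    · have hx12 : x = 0 ∨ x = C.a - 1 := by
        have := C.Ob_sub h2
        simp only [Set.mem_insert_iff, Set.mem_singleton_iff] at this
        rcases this with h | h | h
        · exact absurd h hx0.2.2
        · left; exact h
        · right; exact h
      have hxM : x ∈ C.Mset := by
        rcases hx12 with h | h
        · rw [h]; left; rfl
        · rw [h]; right; left; rfl
      refine ⟨C.Mset, by left; rfl, ?_⟩
      show delTwo C.a C.b '' C.Mset = orbitOf C.bd2 y
      rw [← C.orbit_B_M hxM, ← C.orbit_bd2_del hx0, hdel]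
    · refine ⟨orbitOf C.bdD x, by right; exact ⟨x, hx0.1, h1, h2, rfl⟩, ?_⟩
      show delTwo C.a C.b '' orbitOf C.bdD x = orbitOf C.bd2 y
      rw [← C.orbit_B_eq_orbit_bd hx0.1 h1 h2, ← C.orbit_bd2_del hx0, hdel]
  · rintro ⟨T, hT, rfl⟩
    rcases hT with rfl | hT
    · refine ⟨0, by omega, ?_⟩
      show delTwo C.a C.b '' C.Mset = orbitOf C.bd2 0
      have e0 : delTwo C.a C.b 0 = 0 := delTwo_low C.hab (by omega)
      rw [← C.orbitB0_eq_Mset, ← C.orbit_bd2_del C.zero_mem_S0, e0]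
    · obtain ⟨x, hx, h1, h2, rfl⟩ := hT
      have hx0 : x ∈ C.S0 := by
        refine ⟨hx, ?_, ?_⟩
        · intro hc; rw [hc] at h1; exact h1 (mem_orbitOf_self _ _)
        · intro hc; rw [hc] at h2; exact h2 (mem_orbitOf_self _ _)
      refine ⟨delTwo C.a C.b x, ?_, ?_⟩
      · have hle := delTwo_le (a := C.a) (b := C.b) (k := x)
        by_cases hc : x = 2*C.N - 1
        · rw [hc, delTwo_high (by omega) (by omega)]; omega
        · have : x ≤ 2*C.N - 3 := by
            have := hx0.2.2; omega
          omega
      · show delTwo C.a C.b '' orbitOf C.bdD x = orbitOf C.bd2 (delTwo C.a C.b x)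
        rw [C.orbit_bd2_del hx0, C.orbit_B_eq_orbit_bd hx0.1 h1 h2]

lemma image_injOn : Set.InjOn (fun S => delTwo C.a C.b '' S) (insert C.Mset C.Others) := by
  have hsub : ∀ T ∈ insert C.Mset C.Others, T ⊆ C.S0 := by
    rintro T (rfl | hT)
    · exact C.Mset_sub_S0
    · exact (C.others_props hT).2.2.2
  intro S hS T hT h
  have key : ∀ S T : Set ℕ, S ⊆ C.S0 → T ⊆ C.S0 →
      delTwo C.a C.b '' S = delTwo C.a C.b '' T → S ⊆ T := by
    intro S T hS hT h z hz
    have : delTwo C.a C.b z ∈ delTwo C.a C.b '' T := by rw [← h]; exact ⟨z, hz, rfl⟩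
    obtain ⟨w, hw, hww⟩ := this
    have hzS := hS hz
    have hwT := hT hw
    have : w = z := delTwo_inj C.hab hwT.2.1 hwT.2.2 hzS.2.1 hzS.2.2 hww
    rwa [← this]
  exact Set.Subset.antisymm (key S T (hsub S hS) (hsub T hT) h)
    (key T S (hsub T hT) (hsub S hS) h.symm)

lemma Mset_notmem_others : C.Mset ∉ C.Others := by
  intro hc
  exact (C.others_props hc).2.2.1 (by right; left; rfl)

lemma r_succ : numCyclesOn C.bd2 (2*C.N - 2) + 1 = numCyclesOn C.bdD (2*C.N) := by
  unfold numCyclesOn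
  rw [C.old_decomp, C.new_decomp]
  rw [Set.ncard_image_of_injOn C.image_injOn]
  rw [Set.ncard_insert_of_notMem C.OA_notmem ((C.others_fin.insert C.Ob))]
  rw [Set.ncard_insert_of_notMem C.Ob_notmem C.others_fin]
  rw [Set.ncard_insert_of_notMem C.Mset_notmem_others C.others_fin]

end Ctx


section InsDelMore2
variable {a b : ℕ}
lemma delTwo_succ (hab : a < b) {i : ℕ} (h1 : i ≠ a) (h2 : i ≠ b) (h3 : i + 1 ≠ a)
    (h4 : i + 1 ≠ b) : delTwo a b (i + 1) = delTwo a b i + 1 := by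
  unfold delTwo; split_ifs <;> omega
lemma delTwo_lt (hab : a < b) {x y : ℕ} (hx1 : x ≠ a) (hx2 : x ≠ b) (hy1 : y ≠ a)
    (hy2 : y ≠ b) (h : x < y) : delTwo a b x < delTwo a b y := by
  unfold delTwo; split_ifs <;> omega
end InsDelMore2

lemma deleteTwo_addArc {a b : ℕ} (hab : a < b) (f : ℕ → ℕ) :
    deleteTwo (addArc f a b) a b = f := by
  funext k
  unfold deleteTwo addArc
  rw [if_neg (insTwo_ne_a k), if_neg (insTwo_ne_b hab k), delTwo_insTwo hab,
    delTwo_insTwo hab]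

namespace Ctx
variable (C : Ctx)
lemma g_one_val : C.g 1 = C.a - 1 := by
  have ha := C.ha4; have hab := C.hab2; have hb := C.hbval
  rw [g_def, insTwo_low (by omega)]
  have : C.f 1 = C.a - 1 := by simp only [a]; omega
  rw [this, delTwo_low C.hab (by omega)]
end Ctx

structure ECtx where
  M : ℕ
  f : ℕ → ℕ
  hM : 2 ≤ M
  hlt : ∀ i, i < 2*M → f i < 2*M
  hid : ∀ i, 2*M ≤ i → f i = i
  hinv : ∀ i, f (f i) = i
  hfpf : ∀ i, i < 2*M → f i ≠ i
  hrb : f 0 = 2*M - 1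
  hone : ∀ i, i < 2*M → f i = i + 1 → i = 0 ∧ i + 1 = 2*M - 1
  hstk : ∀ i j, i < 2*M → f i = j → i+1 < 2*M → f (i+1) = j - 1 → ¬ (i + 1 < j - 1)
  hB : f (f 1 + 1) ≠ 2*M - 2

namespace ECtx
variable (P : ECtx)

def a : ℕ := P.f 1 + 1
def b : ℕ := 2*P.M

lemma finj : Function.Injective P.f := fun x y h => by
  have h1 := P.hinv x; rw [h, P.hinv] at h1; exact h1.symm

lemma f_top : P.f (2*P.M - 1) = 0 := by
  have := P.hinv 0; rwa [P.hrb] at this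

lemma f1_facts : 3 ≤ P.f 1 ∧ P.f 1 + 3 ≤ 2*P.M := by
  have hM := P.hM
  have h2M : (1:ℕ) < 2*P.M := by omega
  have hlt1 := P.hlt 1 h2M
  have hne1 : P.f 1 ≠ 1 := P.hfpf 1 h2M
  have hne0 : P.f 1 ≠ 0 := by
    intro h
    have := P.hinv 1
    rw [h, P.hrb] at this
    omega
  have hne2 : P.f 1 ≠ 2 := by
    intro h
    have := P.hone 1 h2M (by omega)
    omega
  have hnetop : P.f 1 ≠ 2*P.M - 1 := by
    intro h
    have := P.hinv 1
    rw [h, P.f_top] at this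
    omega
  have hne2M2 : P.f 1 ≠ 2*P.M - 2 := by
    intro h
    have := P.hstk 0 (2*P.M - 1) (by omega) P.hrb (by omega)
      (by show P.f 1 = 2*P.M - 1 - 1; omega)
    omega
  omega

lemma ha4 : 4 ≤ P.a := by have := P.f1_facts; simp only [a]; omega
lemma hab2 : P.a + 2 ≤ P.b := by have := P.f1_facts; simp only [a, b]; omega
lemma hab : P.a < P.b := by have := P.hab2; omega

/-- the extended involution -/
def F : ℕ → ℕ := addArc P.f P.a P.b

lemma F_a : P.F P.a = P.b := by unfold F addArc; rw [if_pos rfl]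

lemma F_b : P.F P.b = P.a := by
  have := P.hab
  unfold F addArc
  rw [if_neg (by omega), if_pos rfl]

lemma F_other {k : ℕ} (h1 : k ≠ P.a) (h2 : k ≠ P.b) :
    P.F k = insTwo P.a P.b (P.f (delTwo P.a P.b k)) := by
  unfold F addArc; rw [if_neg h1, if_neg h2]

lemma del_lt {k : ℕ} (hk : k < 2*P.M + 2) (h1 : k ≠ P.a) (h2 : k ≠ P.b) :
    delTwo P.a P.b k < 2*P.M := by
  have hab := P.hab2
  have hbv : P.b = 2*P.M := rfl
  have hle := delTwo_le (a := P.a) (b := P.b) (k := k)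
  rcases Nat.lt_or_ge k (2*P.M) with h | h
  · omega
  · have hd : delTwo P.a P.b k = k - 2 := delTwo_high (by omega) (by omega)
    omega

lemma toCtx_hlt : ∀ i, i < 2*(P.M + 1) → P.F i < 2*(P.M + 1) := by
  intro i hi
  have hab := P.hab2
  have hb : P.b = 2*P.M := rfl
  by_cases h1 : i = P.a
  · rw [h1, P.F_a]; omega
  by_cases h2 : i = P.b
  · rw [h2, P.F_b]; omega
  · rw [P.F_other h1 h2]
    have hu := P.del_lt (by omega) h1 h2
    have hw := P.hlt _ hu
    have := insTwo_le (a := P.a) (b := P.b) (P.f (delTwo P.a P.b i))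
    omega

lemma toCtx_hid : ∀ i, 2*(P.M + 1) ≤ i → P.F i = i := by
  intro i hi
  have hab := P.hab2
  have hb : P.b = 2*P.M := rfl
  have h1 : i ≠ P.a := by omega
  have h2 : i ≠ P.b := by omega
  rw [P.F_other h1 h2, delTwo_high (by omega) (by omega),
    P.hid (i-2) (by omega), insTwo_high (by omega) (by omega)]
  omega

lemma toCtx_hinv : ∀ k, P.F (P.F k) = k := by
  intro k
  have hab := P.hab
  by_cases h1 : k = P.a
  · rw [h1, P.F_a, P.F_b]
  by_cases h2 : k = P.b
  · rw [h2, P.F_b, P.F_a]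
  · rw [P.F_other h1 h2,
      P.F_other (insTwo_ne_a _) (insTwo_ne_b hab _),
      delTwo_insTwo hab, P.hinv, insTwo_delTwo hab h1 h2]

lemma toCtx_hfpf : ∀ i, i < 2*(P.M + 1) → P.F i ≠ i := by
  intro i hi h
  have hab := P.hab
  have hab2 := P.hab2
  by_cases h1 : i = P.a
  · rw [h1, P.F_a] at h; omega
  by_cases h2 : i = P.b
  · rw [h2, P.F_b] at h; omega
  · rw [P.F_other h1 h2] at h
    have hu := P.del_lt (by omega) h1 h2
    apply P.hfpf _ hu
    have := delTwo_insTwo hab (P.f (delTwo P.a P.b i))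
    rw [h] at this
    exact this.symm

lemma toCtx_hrb : P.F 0 = 2*(P.M + 1) - 1 := by
  have hab := P.hab2
  have ha := P.ha4
  have hb : P.b = 2*P.M := rfl
  rw [P.F_other (by omega) (by omega), delTwo_low P.hab (by omega), P.hrb,
    insTwo_high (by omega) (by omega)]
  omega

lemma toCtx_hA : P.F (P.F 1 + 1) = 2*(P.M + 1) - 2 := by
  have hab := P.hab2
  have ha := P.ha4
  have hb : P.b = 2*P.M := rfl
  have hF1 : P.F 1 = P.f 1 := by
    rw [P.F_other (by omega) (by omega), delTwo_low P.hab (by omega),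
      insTwo_low (by simp only [a]; omega)]
  rw [hF1]
  have : P.f 1 + 1 = P.a := rfl
  rw [this, P.F_a]
  omega

lemma toCtx_hone : ∀ i, i < 2*(P.M + 1) → P.F i = i + 1 →
    i = 0 ∧ i + 1 = 2*(P.M + 1) - 1 := by
  intro i hi h
  exfalso
  have hab := P.hab2
  have ha := P.ha4
  have hb : P.b = 2*P.M := rfl
  have hM := P.hM
  by_cases h1 : i = P.a
  · rw [h1, P.F_a] at h; omega
  by_cases h2 : i = P.b
  · rw [h2, P.F_b] at h; omega
  rw [P.F_other h1 h2] at h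
  have h3 : i + 1 ≠ P.a := by
    intro hc; rw [← h] at hc; exact insTwo_ne_a _ hc
  have h4 : i + 1 ≠ P.b := by
    intro hc; rw [← h] at hc; exact insTwo_ne_b P.hab _ hc
  have hw : P.f (delTwo P.a P.b i) = delTwo P.a P.b (i+1) := by
    have := delTwo_insTwo P.hab (P.f (delTwo P.a P.b i))
    rw [h] at this
    rw [← this]
  rw [delTwo_succ P.hab h1 h2 h3 h4] at hw
  have hu := P.del_lt (by omega) h1 h2
  have := P.hone _ hu hw
  have hle := delTwo_le (a := P.a) (b := P.b) (k := i)
  -- del i = 0 and del i + 1 = 2M - 1 forces M = 1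
  omega

end ECtx


namespace ECtx
variable (P : ECtx)

lemma toCtx_hstk : ∀ i j, i < 2*(P.M + 1) → P.F i = j → i + 1 < 2*(P.M + 1) →
    P.F (i+1) = j - 1 → ¬ (i + 1 < j - 1) := by
  intro i j hi hFi hi2 hFi2 hlt
  have hab := P.hab
  have hab2 := P.hab2
  have ha := P.ha4
  have hbv : P.b = 2*P.M := rfl
  have hM := P.hM
  by_cases h1 : i = P.a
  · -- j = b, and F (a+1) = b - 1 forces f a = 2M - 2, contradicting B
    rw [h1, P.F_a] at hFi
    rw [h1] at hFi2
    have e1 : P.a + 1 ≠ P.a := by omega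
    have e2 : P.a + 1 ≠ P.b := by omega
    rw [P.F_other e1 e2, delTwo_mid (by omega) (by omega)] at hFi2
    have e3 : P.a + 1 - 1 = P.a := by omega
    rw [e3] at hFi2
    have e4 := delTwo_insTwo hab (P.f P.a)
    rw [hFi2] at e4
    have e5 : delTwo P.a P.b (j - 1) = 2*P.M - 2 := by
      rw [← hFi, delTwo_mid (by omega) (by omega)]
      omega
    apply P.hB
    show P.f P.a = 2*P.M - 2
    rw [← e4, e5]
  by_cases h2 : i = P.b
  · rw [h2, P.F_b] at hFi
    omega
  by_cases h3 : i + 1 = P.a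
  · -- F a = j - 1 = b, so j = b + 1; f (a-1) = 2M-1 = f 0, contra
    rw [h3, P.F_a] at hFi2
    have hj : j = P.b + 1 := by omega
    rw [P.F_other h1 h2] at hFi
    have e1 : delTwo P.a P.b i = i := delTwo_low hab (by omega)
    rw [e1] at hFi
    have e2 := delTwo_insTwo hab (P.f i)
    rw [hFi, hj] at e2
    have e3 : delTwo P.a P.b (P.b + 1) = 2*P.M - 1 := by
      rw [delTwo_high (by omega) (by omega)]
      omega
    rw [e3] at e2
    have e4 : P.f i = P.f 0 := by rw [P.hrb, ← e2]
    have := P.finj e4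
    omega
  by_cases h4 : i + 1 = P.b
  · rw [h4, P.F_b] at hFi2
    omega
  -- generic case
  rw [P.F_other h1 h2] at hFi
  rw [P.F_other h3 h4] at hFi2
  have hja : j ≠ P.a := by intro hc; rw [← hFi] at hc; exact insTwo_ne_a _ hc
  have hjb : j ≠ P.b := by intro hc; rw [← hFi] at hc; exact insTwo_ne_b hab _ hc
  have hj1a : j - 1 ≠ P.a := by intro hc; rw [← hFi2] at hc; exact insTwo_ne_a _ hc
  have hj1b : j - 1 ≠ P.b := by intro hc; rw [← hFi2] at hc; exact insTwo_ne_b hab _ hc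
  have hw1 : P.f (delTwo P.a P.b i) = delTwo P.a P.b j := by
    have e := delTwo_insTwo hab (P.f (delTwo P.a P.b i))
    rw [hFi] at e
    exact e.symm
  have hw2 : P.f (delTwo P.a P.b (i+1)) = delTwo P.a P.b (j-1) := by
    have e := delTwo_insTwo hab (P.f (delTwo P.a P.b (i+1)))
    rw [hFi2] at e
    exact e.symm
  have hsi : delTwo P.a P.b (i+1) = delTwo P.a P.b i + 1 := delTwo_succ hab h1 h2 h3 h4
  have hj3 : 3 ≤ j := by omega
  have hsj : delTwo P.a P.b j = delTwo P.a P.b (j-1) + 1 := by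
    have e := delTwo_succ hab hj1a hj1b (by omega : j - 1 + 1 ≠ P.a)
      (by omega : j - 1 + 1 ≠ P.b)
    rw [show j - 1 + 1 = j by omega] at e
    exact e
  have hmono : delTwo P.a P.b (i+1) < delTwo P.a P.b (j-1) :=
    delTwo_lt hab h3 h4 hj1a hj1b hlt
  apply P.hstk (delTwo P.a P.b i) (delTwo P.a P.b j) (P.del_lt (by omega) h1 h2) hw1
  · have := P.del_lt (show i + 1 < 2*P.M + 2 by omega) h3 h4
    omega
  · rw [← hsi, hw2]
    omega
  · omega

def toCtx : Ctx where
  N := P.M + 1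
  f := P.F
  hN := by have := P.hM; omega
  hlt := P.toCtx_hlt
  hid := P.toCtx_hid
  hinv := P.toCtx_hinv
  hfpf := P.toCtx_hfpf
  hrb := P.toCtx_hrb
  hone := P.toCtx_hone
  hstk := P.toCtx_hstk
  hA := P.toCtx_hA

lemma toCtx_a : P.toCtx.a = P.a := by
  show P.F 1 + 1 = P.f 1 + 1
  have hab := P.hab2
  have ha := P.ha4
  rw [P.F_other (by omega) (by omega), delTwo_low P.hab (by omega),
    insTwo_low (by show (P.f 1) < P.f 1 + 1; omega)]

lemma toCtx_b : P.toCtx.b = P.b := by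
  show 2*(P.M+1) - 2 = 2*P.M
  omega

lemma toCtx_g : P.toCtx.g = P.f := by
  have h : P.toCtx.g = deleteTwo P.F P.toCtx.a P.toCtx.b := rfl
  rw [h, P.toCtx_a, P.toCtx_b]
  exact deleteTwo_addArc P.hab P.f

end ECtx


/-- The inverse of `theta`: insert the arc back. -/
def untheta (E : OneD) : OneD := ⟨E.n + 1, addArc E.f (E.f 1 + 1) (2*E.n)⟩

def mkCtx (D : OneD) (hWF : D.WF) (hSh : D.IsShape) (hA : D.IsA) (hN : 3 ≤ D.n) : Ctx :=
  ⟨D.n, D.f, hN, hWF.2.1, hWF.2.2.1, hWF.2.2.2.1, hWF.2.2.2.2.1, hWF.2.2.2.2.2,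
   fun i hi hf => hSh.1 i ⟨hi, hf⟩,
   fun i j hi hf hi2 hf2 => hSh.2 i j ⟨hi, hf⟩ ⟨hi2, hf2⟩,
   hA.2⟩

def mkECtx (E : OneD) (hWF : E.WF) (hSh : E.IsShape) (hB : E.IsB) : ECtx :=
  ⟨E.n, E.f, hB.1, hWF.2.1, hWF.2.2.1, hWF.2.2.2.1, hWF.2.2.2.2.1, hWF.2.2.2.2.2,
   fun i hi hf => hSh.1 i ⟨hi, hf⟩,
   fun i j hi hf hi2 hf2 => hSh.2 i j ⟨hi, hf⟩ ⟨hi2, hf2⟩,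
   hB.2⟩

namespace Ctx
variable (C : Ctx)

lemma wf_theta : OneD.WF ⟨C.N - 1, C.g⟩ := by
  have hN := C.hN
  have e : 2*(C.N - 1) = 2*C.N - 2 := by omega
  show 1 ≤ C.N - 1 ∧ (∀ i, i < 2*(C.N-1) → C.g i < 2*(C.N-1)) ∧
    (∀ i, 2*(C.N-1) ≤ i → C.g i = i) ∧ (∀ i, C.g (C.g i) = i) ∧
    (∀ i, i < 2*(C.N-1) → C.g i ≠ i) ∧ C.g 0 = 2*(C.N-1) - 1
  rw [e]
  refine ⟨by omega, fun i hi => C.g_lt i hi, fun i hi => C.g_id i hi, C.g_invol,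
    fun i hi => C.g_fpf i hi, ?_⟩
  rw [C.g_rb]
  omega

lemma shape_theta : OneD.IsShape ⟨C.N - 1, C.g⟩ := by
  have hN := C.hN
  have e : 2*(C.N - 1) = 2*C.N - 2 := by omega
  show (∀ i, (i < 2*(C.N-1) ∧ C.g i = i + 1) → i = 0 ∧ i + 1 = 2*(C.N-1) - 1) ∧
    (∀ i j, (i < 2*(C.N-1) ∧ C.g i = j) → (i + 1 < 2*(C.N-1) ∧ C.g (i+1) = j - 1) →
      ¬ (i + 1 < j - 1))
  rw [e]
  constructor
  · intro i hi
    exact absurd hi.2 (fun h => C.g_one i hi.1 h)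
  · intro i j h1 h2 hlt
    exact C.g_stk i j h1.1 h1.2 h2.1 h2.2 hlt

lemma isB_theta : OneD.IsB ⟨C.N - 1, C.g⟩ := by
  have hN := C.hN
  show 2 ≤ C.N - 1 ∧ C.g (C.g 1 + 1) ≠ 2*(C.N-1) - 2
  refine ⟨by omega, ?_⟩
  intro h
  apply C.g_isB
  rw [h]
  omega

lemma r_theta : OneD.r ⟨C.N - 1, C.g⟩ + 1 = OneD.r ⟨C.N, C.f⟩ := by
  have hN := C.hN
  have e : 2*(C.N - 1) = 2*C.N - 2 := by omega
  have h1 : OneD.r ⟨C.N - 1, C.g⟩ = numCyclesOn C.bd2 (2*C.N - 2) := by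
    show numCyclesOn (C.g ∘ gammaOne (2*(C.N - 1))) (2*(C.N - 1)) = _
    rw [e]
    rfl
  have h2 : OneD.r ⟨C.N, C.f⟩ = numCyclesOn C.bdD (2*C.N) := rfl
  rw [h1, h2]
  exact C.r_succ

lemma untheta_theta : untheta ⟨C.N - 1, C.g⟩ = (⟨C.N, C.f⟩ : OneD) := by
  have hN := C.hN
  show (⟨C.N - 1 + 1, addArc C.g (C.g 1 + 1) (2*(C.N - 1))⟩ : OneD) = _
  have e1 : C.N - 1 + 1 = C.N := by omega
  have e2 : C.g 1 + 1 = C.a := by rw [C.g_one_val]; have := C.ha4; omega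
  have e3 : 2*(C.N - 1) = C.b := by have := C.hbval; omega
  rw [e1, e2, e3, C.addArc_g]

end Ctx

lemma ECtx.theta_untheta (P : ECtx) :
    theta ⟨P.toCtx.N, P.toCtx.f⟩ = (⟨P.M, P.f⟩ : OneD) := by
  show (⟨P.toCtx.N - 1, P.toCtx.g⟩ : OneD) = _
  have e1 : P.toCtx.N - 1 = P.M := by show P.M + 1 - 1 = P.M; omega
  rw [e1, P.toCtx_g]

theorem theta_main (D : OneD) (hWF : D.WF) (hSh : D.IsShape) (hA : D.IsA) (hN : 3 ≤ D.n) :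
    (theta D).WF ∧ (theta D).IsShape ∧ (theta D).IsB ∧ (theta D).n = D.n - 1 ∧
    (theta D).r + 1 = D.r ∧ untheta (theta D) = D := by
  have h1 : theta D = ⟨(mkCtx D hWF hSh hA hN).N - 1, (mkCtx D hWF hSh hA hN).g⟩ := rfl
  have h2 : D = ⟨(mkCtx D hWF hSh hA hN).N, (mkCtx D hWF hSh hA hN).f⟩ := rfl
  refine ⟨?_, ?_, ?_, rfl, ?_, ?_⟩
  · rw [h1]; exact (mkCtx D hWF hSh hA hN).wf_theta
  · rw [h1]; exact (mkCtx D hWF hSh hA hN).shape_theta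
  · rw [h1]; exact (mkCtx D hWF hSh hA hN).isB_theta
  · rw [h1]
    conv_rhs => rw [h2]
    exact (mkCtx D hWF hSh hA hN).r_theta
  · rw [h1, (mkCtx D hWF hSh hA hN).untheta_theta]
    exact h2.symm

theorem untheta_main (E : OneD) (hWF : E.WF) (hSh : E.IsShape) (hB : E.IsB) :
    (untheta E).WF ∧ (untheta E).IsShape ∧ (untheta E).IsA ∧ (untheta E).n = E.n + 1 ∧
    theta (untheta E) = E := by
  set P := mkECtx E hWF hSh hB with hP
  have h1 : untheta E = ⟨P.toCtx.N, P.toCtx.f⟩ := rfl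
  have hN := P.toCtx.hN
  refine ⟨?_, ?_, ?_, rfl, ?_⟩
  · rw [h1]
    exact ⟨by show 1 ≤ P.toCtx.N; omega, P.toCtx.hlt, P.toCtx.hid, P.toCtx.hinv,
      P.toCtx.hfpf, P.toCtx.hrb⟩
  · rw [h1]
    exact ⟨fun i h => P.toCtx.hone i h.1 h.2,
      fun i j h h' => P.toCtx.hstk i j h.1 h.2 h'.1 h'.2⟩
  · rw [h1]
    exact ⟨by show 2 ≤ P.toCtx.N; omega, P.toCtx.hA⟩
  · rw [h1, P.theta_untheta, hP]
    rfl

end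


/-- For every `g ≥ 1` and `n ≥ 1`, the map `θ` is a genus-preserving
bijection from `𝒜_g(n+2)` onto `ℬ_g(n+1)`; in particular `|𝒜_g(n+2)| = |ℬ_g(n+1)|`. -/
theorem theta_bijection (g n : ℕ) (hg : 1 ≤ g) (hn : 1 ≤ n) :
    Set.BijOn theta (ASetN g (n + 2)) (BSetN g (n + 1)) ∧
    (∀ D ∈ ASetN g (n + 2), (theta D).HasGenus g) ∧
    (ASetN g (n + 2)).ncard = (BSetN g (n + 1)).ncard := by
  have hto : ∀ D ∈ ASetN g (n + 2),
      theta D ∈ BSetN g (n + 1) ∧ (theta D).HasGenus g ∧ untheta (theta D) = D := by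
    rintro D ⟨⟨⟨hWF, hSh, hGen⟩, hn2⟩, hA⟩
    have h3 : 3 ≤ D.n := by omega
    obtain ⟨tWF, tSh, tB, tn, tr, tun⟩ := theta_main D hWF hSh hA h3
    have tn' : (theta D).n = n + 1 := by omega
    have tGen : (theta D).HasGenus g := by
      have hG : 2*g + D.r = D.n + 1 := hGen
      show 2*g + (theta D).r = (theta D).n + 1
      omega
    exact ⟨⟨⟨⟨tWF, tSh, tGen⟩, tn'⟩, tB⟩, tGen, tun⟩
  have hfrom : ∀ E ∈ BSetN g (n + 1),
      untheta E ∈ ASetN g (n + 2) ∧ theta (untheta E) = E := by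
    rintro E ⟨⟨⟨hWF, hSh, hGen⟩, hn1⟩, hB⟩
    obtain ⟨uWF, uSh, uA, un, uth⟩ := untheta_main E hWF hSh hB
    have h3 : 3 ≤ (untheta E).n := by omega
    obtain ⟨tWF, tSh, tB2, tn, tr, tun⟩ := theta_main (untheta E) uWF uSh uA h3
    rw [uth] at tr
    have uGen : (untheta E).HasGenus g := by
      have hG : 2*g + E.r = E.n + 1 := hGen
      show 2*g + (untheta E).r = (untheta E).n + 1
      omega
    exact ⟨⟨⟨⟨uWF, uSh, uGen⟩, by omega⟩, uA⟩, uth⟩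
  have hmap : Set.MapsTo theta (ASetN g (n+2)) (BSetN g (n+1)) := fun D hD => (hto D hD).1
  have hinj : Set.InjOn theta (ASetN g (n+2)) := by
    intro D1 h1 D2 h2 heq
    have e1 := (hto D1 h1).2.2
    have e2 := (hto D2 h2).2.2
    rw [← e1, ← e2, heq]
  have hsurj : Set.SurjOn theta (ASetN g (n+2)) (BSetN g (n+1)) := by
    intro E hE
    exact ⟨untheta E, (hfrom E hE).1, (hfrom E hE).2⟩
  have hbij : Set.BijOn theta (ASetN g (n+2)) (BSetN g (n+1)) := ⟨hmap, hinj, hsurj⟩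
  refine ⟨hbij, fun D hD => (hto D hD).2.1, ?_⟩
  rw [← hbij.image_eq, Set.ncard_image_of_injOn hinj]


end RNA
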